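/- Let A₁, …, A_d ∈ End(ℂ^N) and set A(ξ) = ∑_{k=1}^d A_k ξ_k for ξ ∈ ℝ^d. Let U ⊆ ℝ^d \ {0} be open, and let π : U → End(ℂ^N) and λ : U → ℝ be of class C² with π(ξ)² = π(ξ), A(ξ) π(ξ) = λ(ξ) π(ξ) and π(ξ) A(ξ) = λ(ξ) π(ξ) for all ξ ∈ U. Then for all i, j ∈ {1,…,d} and ξ ∈ U: π(ξ) (A_i ∂_{ξ_j}π(ξ) + A_j ∂_{ξ_i}π(ξ)) π(ξ) = (∂²_{ξ_iξ_j}λ(ξ)) π(ξ). -/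

import Mathlib

attribute [local instance] Matrix.normedAddCommGroup Matrix.normedSpace

/-- Partial derivative in the `i`-th coordinate direction. -/
noncomputable def pd {E : Type*} [NormedAddCommGroup E] [NormedSpace ℝ E] {m : ℕ}
    (i : Fin m) (f : EuclideanSpace ℝ (Fin m) → E) : EuclideanSpace ℝ (Fin m) → E :=
  fun x => fderiv ℝ f x (EuclideanSpace.single i 1)

section helpers

variable {m N : ℕ}

local notation "M" => Matrix (Fin N) (Fin N) ℂ
local notation "E" => EuclideanSpace ℝ (Fin m)

noncomputable local instance matTop : TopologicalSpace M := PseudoMetricSpace.toUniformSpace.toTopologicalSpace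

noncomputable def mulCLM : M →L[ℝ] M →L[ℝ] M :=
  LinearMap.toContinuousLinearMap
    ((LinearMap.toContinuousLinearMap :
        (M →ₗ[ℝ] M) ≃ₗ[ℝ] (M →L[ℝ] M)).toLinearMap.comp (LinearMap.mul ℝ M))

@[simp] lemma mulCLM_apply (a b : M) : mulCLM a b = a * b := by
  simp [mulCLM]

lemma DifferentiableAt.matmul {f g : E → M} {x : E}
    (hf : DifferentiableAt ℝ f x) (hg : DifferentiableAt ℝ g x) :
    DifferentiableAt ℝ (fun y => f y * g y) x := by
  have hc : DifferentiableAt ℝ (fun y => mulCLM (f y)) x :=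
    (mulCLM.differentiableAt.comp x hf)
  have := hc.clm_apply hg
  simpa using this

lemma pd_matmul {f g : E → M} (i : Fin m) {x : E}
    (hf : DifferentiableAt ℝ f x) (hg : DifferentiableAt ℝ g x) :
    pd i (fun y => f y * g y) x = pd i f x * g x + f x * pd i g x := by
  have hc : HasFDerivAt (fun y => mulCLM (f y)) (mulCLM.comp (fderiv ℝ f x)) x :=
    (mulCLM.hasFDerivAt.comp x hf.hasFDerivAt)
  have h := hc.clm_apply hg.hasFDerivAt
  have h2 : HasFDerivAt (fun y => f y * g y)
      ((mulCLM (f x)).comp (fderiv ℝ g x) + (mulCLM.comp (fderiv ℝ f x)).flip (g x)) x := by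
    simpa using h
  unfold pd
  rw [h2.fderiv]
  simp [add_comm]

lemma pd_smul' {X : Type*} [NormedAddCommGroup X] [NormedSpace ℝ X]
    {c : E → ℝ} {f : E → X} (i : Fin m) {x : E}
    (hc : DifferentiableAt ℝ c x) (hf : DifferentiableAt ℝ f x) :
    pd i (fun y => c y • f y) x = pd i c x • f x + c x • pd i f x := by
  unfold pd
  rw [fderiv_fun_smul hc hf]
  simp [add_comm]

lemma pd_add {X : Type*} [NormedAddCommGroup X] [NormedSpace ℝ X]
    {f g : E → X} (i : Fin m) {x : E}
    (hf : DifferentiableAt ℝ f x) (hg : DifferentiableAt ℝ g x) :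
    pd i (fun y => f y + g y) x = pd i f x + pd i g x := by
  unfold pd
  rw [fderiv_fun_add hf hg]
  simp

lemma pd_congrOn {X : Type*} [NormedAddCommGroup X] [NormedSpace ℝ X]
    {f g : E → X} {U : Set E} (hU : IsOpen U) (h : Set.EqOn f g U)
    (i : Fin m) {x : E} (hx : x ∈ U) : pd i f x = pd i g x := by
  unfold pd
  rw [Filter.EventuallyEq.fderiv_eq (Filter.eventuallyEq_of_mem (hU.mem_nhds hx) h)]

end helpers

/-- **Second-order identity for the projected symbol.**
For `A(ξ) = ∑_k A_k ξ_k`, an eigenvalue `λ` and a projector `π` of class `C²` on an open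
`U ⊆ ℝ^d \ {0}` with `π² = π`, `Aπ = λπ` and `πA = λπ`, one has
`π (A_i ∂_{ξ_j}π + A_j ∂_{ξ_i}π) π = (∂²_{ξ_iξ_j}λ) π` on `U`. -/
theorem stmt_18 (d N : ℕ) (A : Fin d → Matrix (Fin N) (Fin N) ℂ)
    (U : Set (EuclideanSpace ℝ (Fin d))) (hUopen : IsOpen U)
    (hU0 : U ⊆ {ξ | ξ ≠ 0})
    (π : EuclideanSpace ℝ (Fin d) → Matrix (Fin N) (Fin N) ℂ)
    (lam : EuclideanSpace ℝ (Fin d) → ℝ)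
    (hπ : ContDiffOn ℝ 2 π U) (hlam : ContDiffOn ℝ 2 lam U)
    (hproj : ∀ ξ ∈ U, π ξ * π ξ = π ξ)
    (heigR : ∀ ξ ∈ U, (∑ k, (ξ k : ℂ) • A k) * π ξ = (lam ξ : ℂ) • π ξ)
    (heigL : ∀ ξ ∈ U, π ξ * (∑ k, (ξ k : ℂ) • A k) = (lam ξ : ℂ) • π ξ) :
    ∀ i j : Fin d, ∀ ξ ∈ U,
      π ξ * (A i * pd j π ξ + A j * pd i π ξ) * π ξ =
        ((pd i (pd j lam) ξ : ℝ) : ℂ) • π ξ := by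
  letI : TopologicalSpace (Matrix (Fin N) (Fin N) ℂ) := PseudoMetricSpace.toUniformSpace.toTopologicalSpace
  intro i j ξ hξ
  -- real smul versions
  have hre : ∀ (r : ℝ) (mm : Matrix (Fin N) (Fin N) ℂ), (r : ℂ) • mm = r • mm := by
    intro r mm
    rw [← Complex.coe_algebraMap, algebraMap_smul]
  set Af : EuclideanSpace ℝ (Fin d) → Matrix (Fin N) (Fin N) ℂ :=
    fun x => ∑ k, (x k) • A k with hAf
  have hAfeq : ∀ x : EuclideanSpace ℝ (Fin d), (∑ k, ((x k : ℝ) : ℂ) • A k) = Af x := by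
    intro x; simp [hAf, hre]
  have heigR' : ∀ x ∈ U, Af x * π x = lam x • π x := by
    intro x hx; rw [← hAfeq, heigR x hx, hre]
  have heigL' : ∀ x ∈ U, π x * Af x = lam x • π x := by
    intro x hx; rw [← hAfeq, heigL x hx, hre]
  -- the CLM for Af
  set ACLM : EuclideanSpace ℝ (Fin d) →L[ℝ] Matrix (Fin N) (Fin N) ℂ :=
    ∑ k, (EuclideanSpace.proj k).smulRight (A k) with hACLM
  have hACLMapp : ∀ x, ACLM x = Af x := by
    intro x
    simp [hACLM, hAf, ContinuousLinearMap.sum_apply]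
  have hAfdiff : ∀ x, DifferentiableAt ℝ Af x := by
    intro x
    have : DifferentiableAt ℝ (fun y => ACLM y) x := ACLM.differentiableAt
    exact this.congr_of_eventuallyEq (Filter.Eventually.of_forall fun y => (hACLMapp y).symm)
  have hpdAf : ∀ (k : Fin d) (x : EuclideanSpace ℝ (Fin d)), pd k Af x = A k := by
    intro k x
    have h1 : HasFDerivAt Af ACLM x := by
      have := ACLM.hasFDerivAt (x := x)
      exact this.congr_of_eventuallyEq (Filter.Eventually.of_forall fun y => (hACLMapp y).symm)
    unfold pd
    rw [h1.fderiv]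
    simp [hACLM, ContinuousLinearMap.sum_apply, EuclideanSpace.single_apply]
  -- differentiability
  have hπdiff : ∀ x ∈ U, DifferentiableAt ℝ π x := fun x hx =>
    (hπ.differentiableOn (by norm_num)).differentiableAt (hUopen.mem_nhds hx)
  have hlamdiff : ∀ x ∈ U, DifferentiableAt ℝ lam x := fun x hx =>
    (hlam.differentiableOn (by norm_num)).differentiableAt (hUopen.mem_nhds hx)
  have hfdπ : ContDiffOn ℝ 1 (fderiv ℝ π) U := hπ.fderiv_of_isOpen (m := 1) hUopen (by norm_num)
  have hfdlam : ContDiffOn ℝ 1 (fderiv ℝ lam) U := hlam.fderiv_of_isOpen (m := 1) hUopen (by norm_num)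
  have hpdπdiff : ∀ (k : Fin d), ∀ x ∈ U, DifferentiableAt ℝ (pd k π) x := by
    intro k x hx
    have h1 : DifferentiableAt ℝ (fderiv ℝ π) x :=
      (hfdπ.differentiableOn (by norm_num)).differentiableAt (hUopen.mem_nhds hx)
    exact h1.clm_apply (differentiableAt_const _)
  have hpdlamdiff : ∀ (k : Fin d), ∀ x ∈ U, DifferentiableAt ℝ (pd k lam) x := by
    intro k x hx
    have h1 : DifferentiableAt ℝ (fderiv ℝ lam) x :=
      (hfdlam.differentiableOn (by norm_num)).differentiableAt (hUopen.mem_nhds hx)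
    exact h1.clm_apply (differentiableAt_const _)
  -- first derivative of π² = π  ⇒  π ∂π π = 0
  have hsandπ : ∀ (k : Fin d), ∀ x ∈ U, π x * pd k π x * π x = 0 := by
    intro k x hx
    have hE0 : pd k π x = pd k π x * π x + π x * pd k π x := by
      have h := pd_congrOn hUopen (fun y hy => hproj y hy) k hx
      rw [pd_matmul k (hπdiff x hx) (hπdiff x hx)] at h
      exact h.symm
    set P := π x
    set Q := pd k π x
    have hP : P * P = P := hproj x hx
    have h2 : P * Q * P = P * Q * P + P * Q * P := by
      calc P * Q * P = P * (Q * P + P * Q) * P := by rw [← hE0]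
        _ = P * Q * (P * P) + (P * P) * (Q * P) := by noncomm_ring
        _ = P * Q * P + P * Q * P := by rw [hP]; noncomm_ring
    exact left_eq_add.mp h2
  -- first derivative identity E1
  have hE1 : ∀ (k : Fin d), ∀ x ∈ U,
      A k * π x + Af x * pd k π x = pd k lam x • π x + lam x • pd k π x := by
    intro k x hx
    have h := pd_congrOn hUopen (fun y hy => heigR' y hy) k hx
    rw [pd_matmul k (hAfdiff x) (hπdiff x hx), hpdAf k x,
        pd_smul' k (hlamdiff x hx) (hπdiff x hx)] at h
    exact h
  -- second derivative: differentiate E1 j in direction i at ξ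
  have hE2 : pd i (fun y => A j * π y + Af y * pd j π y) ξ
      = pd i (fun y => pd j lam y • π y + lam y • pd j π y) ξ :=
    pd_congrOn hUopen (fun y hy => hE1 j y hy) i hξ
  have hL : pd i (fun y => A j * π y + Af y * pd j π y) ξ
      = A j * pd i π ξ + (A i * pd j π ξ + Af ξ * pd i (pd j π) ξ) := by
    rw [pd_add i ((differentiableAt_const (A j)).matmul (hπdiff ξ hξ))
        ((hAfdiff ξ).matmul (hpdπdiff j ξ hξ)),
      pd_matmul i (differentiableAt_const (A j)) (hπdiff ξ hξ),
      pd_matmul i (hAfdiff ξ) (hpdπdiff j ξ hξ), hpdAf i ξ]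
    have hc : pd i (fun _ => A j) ξ = 0 := by
      unfold pd; rw [fderiv_fun_const]; simp
    rw [hc]
    simp
  have hR : pd i (fun y => pd j lam y • π y + lam y • pd j π y) ξ
      = (pd i (pd j lam) ξ • π ξ + pd j lam ξ • pd i π ξ)
        + (pd i lam ξ • pd j π ξ + lam ξ • pd i (pd j π) ξ) := by
    rw [pd_add i ((hpdlamdiff j ξ hξ).fun_smul (hπdiff ξ hξ))
        ((hlamdiff ξ hξ).fun_smul (hpdπdiff j ξ hξ)),
      pd_smul' i (hpdlamdiff j ξ hξ) (hπdiff ξ hξ),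
      pd_smul' i (hlamdiff ξ hξ) (hpdπdiff j ξ hξ)]
  rw [hL, hR] at hE2
  -- now sandwich
  set P := π ξ
  set Qi := pd i π ξ
  set Qj := pd j π ξ
  set S := pd i (pd j π) ξ
  have hP : P * P = P := hproj ξ hξ
  have hAsand : ∀ X : Matrix (Fin N) (Fin N) ℂ,
      P * (Af ξ * X) * P = lam ξ • (P * X * P) := by
    intro X
    rw [show P * (Af ξ * X) = (P * Af ξ) * X by rw [mul_assoc], heigL' ξ hξ,
      smul_mul_assoc, smul_mul_assoc]
  have key := congrArg (fun X => P * X * P) hE2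
  simp only [mul_add, add_mul, mul_smul_comm, smul_mul_assoc] at key
  rw [hAsand S, hsandπ i ξ hξ, hsandπ j ξ hξ, smul_zero, smul_zero, add_zero,
    show P * P * P = P by rw [hP, hP]] at key
  -- key : P*(A j*Qi)*P + (P*(A i*Qj)*P + lam•(P*S*P)) = pd²lam • P + (0 + lam•(P*S*P)) (roughly)
  rw [hre]
  rw [zero_add, ← add_assoc] at key
  have key3 := add_right_cancel key
  rw [mul_add, add_mul, add_comm]
  exact key3
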